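/- arXiv:1711.09848 — 7 statements merged into one kernel-verified Lean document; each statement's English description precedes it below -/
import Mathlib

section
/- The two-sided infinite Fibonacci sequence v : ℤ → {0,1} defined by v_n = 1 if (nα mod 1) ∈ [1−α, 1) and v_n = 0 otherwise, where α = (√5 − 1)/2, satisfies the symmetry v_{−1} = 1, v_0 = 0, and v_n = v_{−1−n} for all n ∈ ℤ with n ∉ {−1, 0}. -/
/-!
On `[0, 1)` the indicator of `[1 - α, 1)` detects when the rotation by `α` wraps around, so
`v n = ⌊(n + 1) α⌋ - ⌊n α⌋` (the Sturmian form of the sequence). Since `⌊-z⌋ = -⌊z⌋ - 1` for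
non-integral `z`, and `n α`, `(n + 1) α` are irrational for `n ∉ {-1, 0}`, substituting `-1 - n`
for `n` gives back the same difference of floors.
-/

noncomputable def alpha : ℝ := (Real.sqrt 5 - 1) / 2

/-- The two-sided Fibonacci sequence `v n = χ_{[1-α,1)}(nα mod 1)`. -/
noncomputable def v (n : ℤ) : ℕ :=
  if Int.fract ((n : ℝ) * alpha) ∈ Set.Ico (1 - alpha) 1 then 1 else 0

lemma Int.floor_add_sub_floor_eq_ite {a : ℝ} (ha₀ : 0 ≤ a) (ha₁ : a < 1) (y : ℝ) :
    ⌊y + a⌋ - ⌊y⌋ = if 1 - a ≤ Int.fract y then 1 else 0 := by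
  have hy : y + a = (Int.fract y + a) + ⌊y⌋ := by linarith [Int.fract_add_floor y]
  rw [hy, Int.floor_add_intCast, add_sub_cancel_right]
  have := Int.fract_nonneg y
  have := Int.fract_lt_one y
  split_ifs
  · exact Int.floor_eq_iff.2 ⟨by push_cast; linarith, by push_cast; linarith⟩
  · exact Int.floor_eq_iff.2 ⟨by push_cast; linarith, by push_cast; linarith⟩

lemma Irrational.floor_neg {z : ℝ} (hz : Irrational z) : ⌊-z⌋ = -⌊z⌋ - 1 := by
  have hceil : ⌈z⌉ = ⌊z⌋ + 1 :=
    (Int.ceil_eq_floor_add_one_iff_notMem z).2 (by rintro ⟨m, rfl⟩; exact hz.ne_int m rfl)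
  rw [Int.floor_neg, hceil]
  ring

lemma irrational_alpha : Irrational alpha := by
  have h : Irrational (Real.sqrt 5 - 1) := by
    simpa using (Nat.prime_five.irrational_sqrt).sub_intCast 1
  simpa [alpha] using h.div_natCast (m := 2) (by norm_num)

lemma alpha_pos : 0 < alpha := by
  have : (1 : ℝ) < Real.sqrt 5 := by
    rw [Real.lt_sqrt zero_le_one]; norm_num
  unfold alpha; linarith

lemma alpha_lt_one : alpha < 1 := by
  have : Real.sqrt 5 < 3 := by
    rw [Real.sqrt_lt' three_pos]; norm_num
  unfold alpha; linarith

lemma v_eq_floor_sub_floor (n : ℤ) : (v n : ℤ) = ⌊((n : ℝ) + 1) * alpha⌋ - ⌊(n : ℝ) * alpha⌋ := by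
  rw [add_one_mul, Int.floor_add_sub_floor_eq_ite alpha_pos.le alpha_lt_one, v]
  simp only [Set.mem_Ico, Int.fract_lt_one, and_true]
  split_ifs <;> rfl

theorem fibonacci_symmetry :
    v (-1) = 1 ∧ v 0 = 0 ∧ ∀ n : ℤ, n ≠ -1 → n ≠ 0 → v n = v (-1 - n) := by
  have hfloor : ⌊alpha⌋ = 0 := Int.floor_eq_zero_iff.2 ⟨alpha_pos.le, alpha_lt_one⟩
  refine ⟨?_, ?_, fun n hn₁ hn₀ => ?_⟩
  · have h := v_eq_floor_sub_floor (-1)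
    rw [show ((-1 : ℤ) : ℝ) * alpha = -alpha by push_cast; ring,
      irrational_alpha.floor_neg, hfloor] at h
    norm_num at h
    exact_mod_cast h
  · have h := v_eq_floor_sub_floor 0
    norm_num [hfloor] at h
    exact_mod_cast h
  · have hn : Irrational ((n : ℝ) * alpha) := irrational_alpha.intCast_mul hn₀
    have hn' : Irrational (((n : ℝ) + 1) * alpha) := by
      exact_mod_cast irrational_alpha.intCast_mul (m := n + 1) (by omega)
    have h := v_eq_floor_sub_floor (-1 - n)
    rw [show (((-1 - n : ℤ) : ℝ) + 1) * alpha = -((n : ℝ) * alpha) by push_cast; ring,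
      show ((-1 - n : ℤ) : ℝ) * alpha = -(((n : ℝ) + 1) * alpha) by push_cast; ring,
      hn.floor_neg, hn'.floor_neg] at h
    have hsymm : (v (-1 - n) : ℤ) = v n := by rw [h, v_eq_floor_sub_floor n]; ring
    exact_mod_cast hsymm.symm
end

section
/- Any two-sided infinite word b : ℤ → {0,1} that contains neither 00 nor 111 as a subword, and contains both 0 and 1 somewhere (e.g. contains the word 101101 01 101101), can be partitioned around a distinguished block '01' into blocks from {101, 01} to the right and blocks from {101, 10} extending to the left. -/
/-- `w` occurs in the two-sided word `b` at position `n` (encoding 1 = `true`, 0 = `false`). -/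
def OccursAt (b : ℤ → Bool) (n : ℤ) (w : List Bool) : Prop :=
  ∀ i : ℕ, i < w.length → b (n + i) = w.getD i false

/-- rightward block starts -/
def fseq (b : ℤ → Bool) (n0 : ℤ) : ℕ → ℤ
  | 0 => n0
  | k+1 => if b (fseq b n0 k) then fseq b n0 k + 3 else fseq b n0 k + 2

/-- leftward block starts -/
def gseq (b : ℤ → Bool) (n0 : ℤ) : ℕ → ℤ
  | 0 => n0
  | k+1 => if b (gseq b n0 k - 1) then gseq b n0 k - 3 else gseq b n0 k - 2

/-- the two-sided sequence -/
def nseqD (b : ℤ → Bool) (n0 : ℤ) : ℤ → ℤ :=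
  fun i => if 0 ≤ i then fseq b n0 i.toNat else gseq b n0 (-i).toNat

theorem block_partition_two_sided (b : ℤ → Bool)
    (h00 : ¬ ∃ n : ℤ, b n = false ∧ b (n + 1) = false)
    (h111 : ¬ ∃ n : ℤ, b n = true ∧ b (n + 1) = true ∧ b (n + 2) = true)
    (hocc : ∃ m : ℤ, OccursAt b m
      [true, false, true, true, false, true, false, true, true, false, true, true, false, true]) :
    ∃ nseq : ℤ → ℤ, StrictMono nseq ∧
      Filter.Tendsto nseq Filter.atTop Filter.atTop ∧
      Filter.Tendsto nseq Filter.atBot Filter.atBot ∧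
      b (nseq 0) = false ∧ b (nseq 0 + 1) = true ∧
      (∀ i : ℤ, 0 ≤ i →
        (nseq (i + 1) = nseq i + 3 ∧ OccursAt b (nseq i) [true, false, true]) ∨
        (nseq (i + 1) = nseq i + 2 ∧ OccursAt b (nseq i) [false, true])) ∧
      (∀ i : ℤ, i < 0 →
        (nseq (i + 1) = nseq i + 3 ∧ OccursAt b (nseq i) [true, false, true]) ∨
        (nseq (i + 1) = nseq i + 2 ∧ OccursAt b (nseq i) [true, false])) := by
  obtain ⟨m, hm⟩ := hocc
  -- no 00 consequences
  have h0 : ∀ n : ℤ, b n = false → b (n+1) = true := by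
    intro n hn
    by_contra hc
    exact h00 ⟨n, hn, by simpa using hc⟩
  have h0' : ∀ n : ℤ, b (n+1) = false → b n = true := by
    intro n hn
    by_contra hc
    exact h00 ⟨n, by simpa using hc, hn⟩
  -- no 111 consequences
  have h1 : ∀ n : ℤ, b n = true → b (n+1) = true → b (n+2) = false := by
    intro n ha hb
    by_contra hc
    exact h111 ⟨n, ha, hb, by simpa using hc⟩
  have h1' : ∀ n : ℤ, b (n+1) = true → b (n+2) = true → b n = false := by
    intro n ha hb
    by_contra hc
    exact h111 ⟨n, by simpa using hc, ha, hb⟩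
  -- the distinguished position
  set n0 : ℤ := m + 6 with hn0
  have hA : b (n0 - 2) = false := by simpa [hn0, show m + 6 - 2 = m + (4:ℕ) by push_cast; ring] using hm 4 (by norm_num)
  have hB : b (n0 - 1) = true := by simpa [hn0, show m + 6 - 1 = m + (5:ℕ) by push_cast; ring] using hm 5 (by norm_num)
  have hC : b n0 = false := by simpa [hn0, show m + 6 = m + (6:ℕ) by push_cast; ring] using hm 6 (by norm_num)
  have hD : b (n0 + 1) = true := by simpa [hn0, show m + 6 + 1 = m + (7:ℕ) by push_cast; ring] using hm 7 (by norm_num)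
  -- occurrence helpers
  have hocc3 : ∀ p : ℤ, b p = true → b (p+1) = false → b (p+2) = true →
      OccursAt b p [true, false, true] := by
    intro p ha hb hc i hi
    simp only [List.length] at hi
    interval_cases i
    · simpa using ha
    · simpa using hb
    · simpa using hc
  have hocc2 : ∀ p : ℤ, ∀ x y : Bool, b p = x → b (p+1) = y →
      OccursAt b p [x, y] := by
    intro p x y ha hb i hi
    simp only [List.length] at hi
    interval_cases i
    · simpa using ha
    · simpa using hb
  -- rightward invariant: b (fseq k - 1) = true
  have hfinv : ∀ k : ℕ, b (fseq b n0 k - 1) = true := by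
    intro k
    induction k with
    | zero => simpa [fseq] using hB
    | succ k ih =>
      by_cases hbk : b (fseq b n0 k) = true
      · have : fseq b n0 (k+1) = fseq b n0 k + 3 := by simp [fseq, hbk]
        rw [this]
        have h2 : b (fseq b n0 k - 1 + 2) = false := h1 _ (by simpa using ih) (by simpa using hbk)
        have := h0 _ (by simpa [show fseq b n0 k - 1 + 2 = fseq b n0 k + 1 by ring] using h2)
        simpa [show fseq b n0 k + 1 + 1 = fseq b n0 k + 3 - 1 by ring] using this
      · have hbk' : b (fseq b n0 k) = false := by simpa using hbk
        have : fseq b n0 (k+1) = fseq b n0 k + 2 := by simp [fseq, hbk']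
        rw [this]
        have := h0 _ hbk'
        simpa [show fseq b n0 k + 1 = fseq b n0 k + 2 - 1 by ring] using this
  -- rightward spec
  have hfspec : ∀ k : ℕ,
      (fseq b n0 (k+1) = fseq b n0 k + 3 ∧ OccursAt b (fseq b n0 k) [true, false, true]) ∨
      (fseq b n0 (k+1) = fseq b n0 k + 2 ∧ OccursAt b (fseq b n0 k) [false, true]) := by
    intro k
    set p := fseq b n0 k with hp
    by_cases hbk : b p = true
    · left
      have h2 : b (p + 1) = false := by
        have := h1 (p-1) (hfinv k) (by simpa [show p - 1 + 1 = p by ring] using hbk)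
        simpa [show p - 1 + 2 = p + 1 by ring] using this
      have h3 : b (p + 2) = true := by
        have := h0 _ h2
        simpa [show p + 1 + 1 = p + 2 by ring] using this
      exact ⟨by simp [fseq, ← hp, hbk], hocc3 p hbk h2 h3⟩
    · right
      have hbk' : b p = false := by simpa using hbk
      exact ⟨by simp [fseq, ← hp, hbk'], hocc2 p false true hbk' (h0 _ hbk')⟩
  -- leftward invariant
  have hginv : ∀ k : ℕ, b (gseq b n0 k) = true ∨
      (b (gseq b n0 k - 1) = true ∧ b (gseq b n0 k - 2) = false) := by
    intro k
    induction k with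
    | zero => right; exact ⟨by simpa [gseq] using hB, by simpa [gseq] using hA⟩
    | succ k ih =>
      set q := gseq b n0 k with hq
      by_cases hbk : b (q - 1) = true
      · have hstep : gseq b n0 (k+1) = q - 3 := by simp [gseq, ← hq, hbk]
        -- b (q-2) = false in both invariant cases
        have h2 : b (q - 2) = false := by
          rcases ih with hqt | ⟨_, h2⟩
          · exact h1' (q - 2) (by simpa [show q-2+1 = q-1 by ring] using hbk)
              (by simpa [show q-2+2 = q by ring] using hqt)
          · exact h2
        have h3 : b (q - 3) = true := h0' (q - 3) (by simpa [show q-3+1 = q-2 by ring] using h2)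
        rw [hstep]; left; exact h3
      · have hbk' : b (q - 1) = false := by simpa using hbk
        have hstep : gseq b n0 (k+1) = q - 2 := by simp [gseq, ← hq, hbk']
        have h3 : b (q - 2) = true := h0' (q - 2) (by simpa [show q-2+1 = q-1 by ring] using hbk')
        rw [hstep]; left; exact h3
  -- leftward spec: relates gseq (k+1) (= block start) to gseq k (= block end + 1)
  have hgspec : ∀ k : ℕ,
      (gseq b n0 k = gseq b n0 (k+1) + 3 ∧ OccursAt b (gseq b n0 (k+1)) [true, false, true]) ∨
      (gseq b n0 k = gseq b n0 (k+1) + 2 ∧ OccursAt b (gseq b n0 (k+1)) [true, false]) := by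
    intro k
    set q := gseq b n0 k with hq
    by_cases hbk : b (q - 1) = true
    · left
      have hstep : gseq b n0 (k+1) = q - 3 := by simp [gseq, ← hq, hbk]
      have h2 : b (q - 2) = false := by
        rcases hginv k with hqt | ⟨_, h2⟩
        · exact h1' (q - 2) (by simpa [show q-2+1 = q-1 by ring] using hbk)
            (by simpa [show q-2+2 = q by ring] using hqt)
        · exact h2
      have h3 : b (q - 3) = true := h0' (q - 3) (by simpa [show q-3+1 = q-2 by ring] using h2)
      rw [hstep]
      refine ⟨by ring, hocc3 _ h3 (by simpa [show q-3+1 = q-2 by ring] using h2)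
        (by simpa [show q-3+2 = q-1 by ring] using hbk)⟩
    · right
      have hbk' : b (q - 1) = false := by simpa using hbk
      have hstep : gseq b n0 (k+1) = q - 2 := by simp [gseq, ← hq, hbk']
      have h3 : b (q - 2) = true := h0' (q - 2) (by simpa [show q-2+1 = q-1 by ring] using hbk')
      rw [hstep]
      exact ⟨by ring, hocc2 _ true false h3 (by simpa [show q-2+1 = q-1 by ring] using hbk')⟩
  -- basic values
  have hf0 : fseq b n0 0 = n0 := rfl
  have hg0 : gseq b n0 0 = n0 := rfl
  -- conversion lemmas for nseqD
  have hpos : ∀ i : ℤ, 0 ≤ i → nseqD b n0 i = fseq b n0 i.toNat := by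
    intro i hi; simp [nseqD, hi]
  have hneg : ∀ i : ℤ, i < 0 → nseqD b n0 i = gseq b n0 (-i).toNat := by
    intro i hi; simp [nseqD, not_le.mpr hi]
  have hneg1 : ∀ i : ℤ, i < 0 → nseqD b n0 (i+1) = gseq b n0 ((-i).toNat - 1) := by
    intro i hi
    rcases eq_or_lt_of_le (by omega : i + 1 ≤ 0) with h | h
    · have hi1 : i = -1 := by omega
      subst hi1
      have : (0:ℤ) ≤ (0:ℤ) := le_refl 0
      simp [nseqD]
      rfl
    · rw [hneg (i+1) (by omega)]
      congr 1
      omega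
  -- step inequality
  have hstep : ∀ i : ℤ, nseqD b n0 i + 2 ≤ nseqD b n0 (i+1) := by
    intro i
    rcases le_or_gt 0 i with hi | hi
    · rw [hpos i hi, hpos (i+1) (by omega), show (i+1).toNat = i.toNat + 1 by omega]
      rcases hfspec i.toNat with ⟨h, _⟩ | ⟨h, _⟩ <;> omega
    · rw [hneg i hi, hneg1 i hi]
      have hk : (-i).toNat - 1 + 1 = (-i).toNat := by omega
      rcases hgspec ((-i).toNat - 1) with ⟨h, _⟩ | ⟨h, _⟩ <;> rw [hk] at h <;> omega
  have hmono : StrictMono (nseqD b n0) := by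
    apply strictMono_int_of_lt_succ
    intro i
    have := hstep i
    omega
  -- growth bounds
  have hgrowN : ∀ k : ℕ, nseqD b n0 0 + k ≤ nseqD b n0 k := by
    intro k
    induction k with
    | zero => simp
    | succ k ih =>
      have h := hstep (k : ℤ)
      push_cast
      omega
  have hgrow : ∀ j : ℤ, 0 ≤ j → nseqD b n0 0 + j ≤ nseqD b n0 j := by
    intro j hj
    have := hgrowN j.toNat
    rwa [Int.toNat_of_nonneg hj] at this
  have hgrowN' : ∀ k : ℕ, nseqD b n0 (-(k:ℤ)) ≤ nseqD b n0 0 - k := by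
    intro k
    induction k with
    | zero => simp
    | succ k ih =>
      have h := hstep (-(k:ℤ) - 1)
      rw [show -(k:ℤ) - 1 + 1 = -(k:ℤ) by ring] at h
      push_cast
      rw [show -((k:ℤ) + 1) = -(k:ℤ) - 1 by ring]
      omega
  have hgrow' : ∀ j : ℤ, j ≤ 0 → nseqD b n0 j ≤ nseqD b n0 0 + j := by
    intro j hj
    have := hgrowN' (-j).toNat
    rw [Int.toNat_of_nonneg (by omega : (0:ℤ) ≤ -j)] at this
    simpa using this
  refine ⟨nseqD b n0, hmono, ?_, ?_, ?_, ?_, ?_, ?_⟩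
  · refine Filter.tendsto_atTop_mono' _ ?_ (Filter.tendsto_atTop_add_const_left _ (nseqD b n0 0) Filter.tendsto_id)
    filter_upwards [Filter.eventually_ge_atTop (0:ℤ)] with j hj
    exact hgrow j hj
  · refine Filter.tendsto_atBot_mono' _ ?_ (Filter.tendsto_atBot_add_const_left _ (nseqD b n0 0) Filter.tendsto_id)
    filter_upwards [Filter.eventually_le_atBot (0:ℤ)] with j hj
    exact hgrow' j hj
  · rw [hpos 0 le_rfl]; simpa [hf0] using hC
  · rw [hpos 0 le_rfl]; simpa [hf0] using hD
  · intro i hi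
    rw [hpos i hi, hpos (i+1) (by omega), show (i+1).toNat = i.toNat + 1 by omega]
    exact hfspec i.toNat
  · intro i hi
    rw [hneg i hi, hneg1 i hi]
    have hk : (-i).toNat - 1 + 1 = (-i).toNat := by omega
    rcases hgspec ((-i).toNat - 1) with ⟨h, ho⟩ | ⟨h, ho⟩
    · left; rw [hk] at h ho; exact ⟨h, ho⟩
    · right; rw [hk] at h ho; exact ⟨h, ho⟩
end

section
/- Let T₀ = [[0,1],[−1,0]] and T₁ = [[0,1],[−1,−1]] be 2×2 real matrices, and set T_{101} = T₁T₀T₁ and T_{01} = T₁T₀. If a vector (y₁, y₂) ∈ ℝ² satisfies y₁·y₂ < 0 and |y₁| < |y₂| (property C), then for w ∈ {101, 01}, the vector (z₁, z₂) = T_w (y₁, y₂) satisfies: (A) |z₂| − |y₂| ≥ min{|y₁+y₂|, |y₁|} > 0; (B) |z₁+z₂| ≥ |y₁+y₂| and |z₁| ≥ |y₁|; (C) z₁·z₂ < 0 and |z₁| < |z₂|. -/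
def T0 : Matrix (Fin 2) (Fin 2) ℝ := !![0, 1; -1, 0]
def T1 : Matrix (Fin 2) (Fin 2) ℝ := !![0, 1; -1, -1]
def T101 : Matrix (Fin 2) (Fin 2) ℝ := T1 * T0 * T1
def T01 : Matrix (Fin 2) (Fin 2) ℝ := T1 * T0

theorem transfer_preserves_C (T : Matrix (Fin 2) (Fin 2) ℝ) (hT : T = T101 ∨ T = T01)
    (y : Fin 2 → ℝ) (hsign : y 0 * y 1 < 0) (habs : |y 0| < |y 1|) :
    let z := T.mulVec y
    (|z 1| - |y 1| ≥ min |y 0 + y 1| |y 0| ∧ 0 < min |y 0 + y 1| |y 0|) ∧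
    (|z 0 + z 1| ≥ |y 0 + y 1| ∧ |z 0| ≥ |y 0|) ∧
    (z 0 * z 1 < 0 ∧ |z 0| < |z 1|) := by
  intro z
  have hz : ∀ i, z i = T.mulVec y i := fun _ => rfl
  rcases hT with rfl | rfl
  · simp only [hz, T101, T01, T0, T1, Matrix.mulVec, dotProduct,
      Fin.sum_univ_two] at *
    norm_num [Matrix.mul_apply, Fin.sum_univ_two, Matrix.cons_val_zero,
      Matrix.cons_val_one, Matrix.head_cons] at *
    rcases mul_neg_iff.mp hsign with ⟨ha, hb⟩ | ⟨ha, hb⟩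
    · rw [abs_of_pos ha, abs_of_neg hb] at habs
      have h3 : y 0 + y 1 < 0 := by linarith
      have h4 : y 0 + 2 * y 1 < 0 := by linarith
      have h5 : -y 1 + (y 0 + 2 * y 1) < 0 := by linarith
      rw [abs_of_neg h3, abs_of_pos ha, abs_of_neg hb, abs_of_neg h4, abs_of_neg h5]
      exact ⟨⟨Or.inl (by linarith), h3.ne, ha.ne'⟩, ⟨by linarith, by linarith⟩,
        mul_pos_of_neg_of_neg hb h4, by linarith⟩
    · rw [abs_of_neg ha, abs_of_pos hb] at habs
      have h3 : 0 < y 0 + y 1 := by linarith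
      have h4 : 0 < y 0 + 2 * y 1 := by linarith
      have h5 : 0 < -y 1 + (y 0 + 2 * y 1) := by linarith
      rw [abs_of_pos h3, abs_of_neg ha, abs_of_pos hb, abs_of_pos h4, abs_of_pos h5]
      exact ⟨⟨Or.inl (by linarith), h3.ne', ha.ne⟩, ⟨by linarith, by linarith⟩,
        mul_pos hb h4, by linarith⟩
  · simp only [hz, T101, T01, T0, T1, Matrix.mulVec, dotProduct,
      Fin.sum_univ_two] at *
    norm_num [Matrix.mul_apply, Fin.sum_univ_two, Matrix.cons_val_zero,
      Matrix.cons_val_one, Matrix.head_cons] at *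
    rcases mul_neg_iff.mp hsign with ⟨ha, hb⟩ | ⟨ha, hb⟩
    · rw [abs_of_pos ha, abs_of_neg hb] at habs
      have h3 : y 0 + y 1 < 0 := by linarith
      have h4 : 0 < y 0 + -y 1 := by linarith
      rw [abs_of_neg h3, abs_of_pos ha, abs_of_neg hb, abs_of_pos h4]
      exact ⟨⟨Or.inr (by linarith), h3.ne, ha.ne'⟩, by linarith,
        mul_pos ha h4, by linarith⟩
    · rw [abs_of_neg ha, abs_of_pos hb] at habs
      have h3 : 0 < y 0 + y 1 := by linarith
      have h4 : y 0 + -y 1 < 0 := by linarith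
      rw [abs_of_pos h3, abs_of_neg ha, abs_of_pos hb, abs_of_neg h4]
      exact ⟨⟨Or.inr (by linarith), h3.ne', ha.ne⟩, by linarith,
        mul_pos_of_neg_of_neg ha h4, by linarith⟩
end

section
/- Let T_{101} = [[0,−1],[1,2]] and T_{10} = T₀T₁, where T₀ = [[0,1],[−1,0]] and T₁ = [[0,1],[−1,−1]]. If (y₁, y₂) ∈ ℝ² satisfies y₁·y₂ < 0 and |y₁| > |y₂| (property F), then for w ∈ {101, 10} the vector (z₁, z₂) = T_w⁻¹ (y₁, y₂) satisfies: (D) |z₁| − |y₁| ≥ min{|y₁+y₂|, |y₂|} > 0; (E) |z₁+z₂| ≥ |y₁+y₂| and |z₂| ≥ |y₂|; (F) z₁·z₂ < 0 and |z₁| > |z₂|. -/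
def T10 : Matrix (Fin 2) (Fin 2) ℝ := T0 * T1

theorem inverse_transfer_preserves_F (T : Matrix (Fin 2) (Fin 2) ℝ)
    (hT : T = T101 ∨ T = T10)
    (y : Fin 2 → ℝ) (hsign : y 0 * y 1 < 0) (habs : |y 0| > |y 1|) :
    let z := T⁻¹.mulVec y
    (|z 0| - |y 0| ≥ min |y 0 + y 1| |y 1| ∧ 0 < min |y 0 + y 1| |y 1|) ∧
    (|z 0 + z 1| ≥ |y 0 + y 1| ∧ |z 1| ≥ |y 1|) ∧
    (z 0 * z 1 < 0 ∧ |z 0| > |z 1|) := by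
  intro z
  have h101 : T101⁻¹ = !![2, 1; -1, 0] := by
    simp [T101, T1, T0, Matrix.inv_def, Matrix.adjugate_fin_two, Matrix.det_fin_two]
    norm_num
  have h10 : T10⁻¹ = !![-1, 1; 0, -1] := by
    simp [T10, T1, T0, Matrix.inv_def, Matrix.adjugate_fin_two, Matrix.det_fin_two]
  rcases hT with rfl | rfl
  · have hz0 : z 0 = 2 * y 0 + y 1 := by
      simp [z, h101, Matrix.mulVec, dotProduct, Fin.sum_univ_two]
    have hz1 : z 1 = -(y 0) := by
      simp [z, h101, Matrix.mulVec, dotProduct, Fin.sum_univ_two]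
    rw [hz0, hz1]
    rcases lt_trichotomy (y 0) 0 with h0 | h0 | h0
    · -- y0 < 0, y1 > 0, -y0 > y1
      have h1 : 0 < y 1 := by nlinarith
      have hlt : y 1 < -(y 0) := by rw [abs_of_neg h0, abs_of_pos h1] at habs; linarith
      rw [abs_of_neg h0, abs_of_pos h1, abs_of_neg (by linarith : y 0 + y 1 < 0),
        abs_of_neg (by linarith : 2 * y 0 + y 1 < 0),
        abs_of_neg (by linarith : 2 * y 0 + y 1 + -(y 0) < 0), abs_of_pos (by linarith : (0:ℝ) < -(y 0))]
      refine ⟨⟨?_, ?_⟩, ⟨?_, ?_⟩, ?_, ?_⟩ <;>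
        first
        | nlinarith
        | · rw [lt_min_iff]; constructor <;> linarith
        | · rcases min_le_iff.mp (min_le_left |y 0 + y 1| |y 1|) with h | h <;> linarith [min_le_left (-(y 0 + y 1)) (y 1), min_le_right (-(y 0 + y 1)) (y 1)]
    · exfalso; rw [h0] at hsign; simp at hsign
    · have h1 : y 1 < 0 := by nlinarith
      have hlt : -(y 1) < y 0 := by rw [abs_of_pos h0, abs_of_neg h1] at habs; linarith
      rw [abs_of_pos h0, abs_of_neg h1, abs_of_pos (by linarith : 0 < y 0 + y 1),
        abs_of_pos (by linarith : 0 < 2 * y 0 + y 1),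
        abs_of_pos (by linarith : 0 < 2 * y 0 + y 1 + -(y 0)), abs_of_neg (by linarith : -(y 0) < 0)]
      refine ⟨⟨?_, ?_⟩, ⟨?_, ?_⟩, ?_, ?_⟩ <;>
        first
        | nlinarith
        | · rw [lt_min_iff]; constructor <;> linarith
        | · rcases min_le_iff.mp (min_le_left |y 0 + y 1| |y 1|) with h | h <;> linarith [min_le_left (y 0 + y 1) (-(y 1)), min_le_right (y 0 + y 1) (-(y 1))]
  · have hz0 : z 0 = -(y 0) + y 1 := by
      simp [z, h10, Matrix.mulVec, dotProduct, Fin.sum_univ_two]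
    have hz1 : z 1 = -(y 1) := by
      simp [z, h10, Matrix.mulVec, dotProduct, Fin.sum_univ_two]
    rw [hz0, hz1]
    rcases lt_trichotomy (y 0) 0 with h0 | h0 | h0
    · have h1 : 0 < y 1 := by nlinarith
      have hlt : y 1 < -(y 0) := by rw [abs_of_neg h0, abs_of_pos h1] at habs; linarith
      rw [abs_of_neg h0, abs_of_pos h1, abs_of_neg (by linarith : y 0 + y 1 < 0),
        abs_of_pos (by linarith : 0 < -(y 0) + y 1),
        abs_of_pos (by linarith : 0 < -(y 0) + y 1 + -(y 1)), abs_of_neg (by linarith : -(y 1) < 0)]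
      refine ⟨⟨?_, ?_⟩, ⟨?_, ?_⟩, ?_, ?_⟩ <;>
        first
        | nlinarith
        | (rw [lt_min_iff]; constructor <;> linarith)
        | exact le_trans (min_le_left _ _) (by linarith)
        | exact le_trans (min_le_right _ _) (by linarith)
    · exfalso; rw [h0] at hsign; simp at hsign
    · have h1 : y 1 < 0 := by nlinarith
      have hlt : -(y 1) < y 0 := by rw [abs_of_pos h0, abs_of_neg h1] at habs; linarith
      rw [abs_of_pos h0, abs_of_neg h1, abs_of_pos (by linarith : 0 < y 0 + y 1),
        abs_of_neg (by linarith : -(y 0) + y 1 < 0),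
        abs_of_neg (by linarith : -(y 0) + y 1 + -(y 1) < 0), abs_of_pos (by linarith : (0:ℝ) < -(y 1))]
      refine ⟨⟨?_, ?_⟩, ⟨?_, ?_⟩, ?_, ?_⟩ <;>
        first
        | nlinarith
        | (rw [lt_min_iff]; constructor <;> linarith)
        | exact le_trans (min_le_left _ _) (by linarith)
        | exact le_trans (min_le_right _ _) (by linarith)
end

section
/- Let (w_i)_{i∈ℕ} be a sequence with each w_i ∈ {101, 01}, and let (y^{(i)}) be defined by y^{(i+1)} = T_{w_i} y^{(i)} where T_{101} = [[0,−1],[1,2]] and T_{01} = [[−1,0],[1,−1]]. If y^{(0)} has property C (first and second components of opposite sign, second strictly larger in absolute value), then |y^{(i)}_2| → ∞ as i → ∞; in fact |y^{(i)}_2| ≥ |y^{(0)}_2| + i·min{|y^{(0)}_1 + y^{(0)}_2|, |y^{(0)}_1|}. -/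
lemma T101_apply (v : Fin 2 → ℝ) :
    T101.mulVec v 0 = -(v 1) ∧ T101.mulVec v 1 = v 0 + 2 * v 1 := by
  constructor <;> simp [T101, T01, T1, T0, Matrix.mulVec, dotProduct, Fin.sum_univ_two, Matrix.mul_apply] <;> ring_nf <;> tauto

lemma T01_apply (v : Fin 2 → ℝ) :
    T01.mulVec v 0 = -(v 0) ∧ T01.mulVec v 1 = v 0 - v 1 := by
  constructor <;> simp [T101, T01, T1, T0, Matrix.mulVec, dotProduct, Fin.sum_univ_two, Matrix.mul_apply] <;> ring_nf <;> tauto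

lemma step_lemma (c a b a' b' : ℝ)
    (h1 : a * b < 0) (h2 : |a| < |b|) (h3 : c ≤ min |a + b| |a|)
    (hcase : (a' = -b ∧ b' = a + 2 * b) ∨ (a' = -a ∧ b' = a - b)) :
    a' * b' < 0 ∧ |a'| < |b'| ∧ c ≤ min |a' + b'| |a'| ∧ |b| + c ≤ |b'| := by
  have hc1 : c ≤ |a + b| := h3.trans (min_le_left _ _)
  have hc2 : c ≤ |a| := h3.trans (min_le_right _ _)
  rcases mul_neg_iff.mp h1 with ⟨ha, hb⟩ | ⟨ha, hb⟩
  · -- 0 < a, b < 0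
    rw [abs_of_pos ha] at h2 hc2
    rw [abs_of_neg hb] at h2
    have hab : a + b < 0 := by linarith
    rw [abs_of_neg hab] at hc1
    rcases hcase with ⟨ha', hb'⟩ | ⟨ha', hb'⟩
    · -- a' = -b > 0, b' = a + 2b < 0
      have h1' : 0 < a' := by rw [ha']; linarith
      have h2' : b' < 0 := by rw [hb']; linarith
      refine ⟨mul_neg_of_pos_of_neg h1' h2', ?_, ?_, ?_⟩
      · rw [abs_of_pos h1', abs_of_neg h2', ha', hb']; linarith
      · have : a' + b' < 0 := by rw [ha', hb']; linarith
        rw [abs_of_neg this, abs_of_pos h1', ha', hb', le_min_iff]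
        constructor <;> linarith
      · rw [abs_of_neg hb, abs_of_neg h2', hb']; linarith
    · -- a' = -a < 0, b' = a - b > 0
      have h1' : a' < 0 := by rw [ha']; linarith
      have h2' : 0 < b' := by rw [hb']; linarith
      refine ⟨mul_neg_of_neg_of_pos h1' h2', ?_, ?_, ?_⟩
      · rw [abs_of_neg h1', abs_of_pos h2', ha', hb']; linarith
      · have : 0 < a' + b' := by rw [ha', hb']; linarith
        rw [abs_of_pos this, abs_of_neg h1', ha', hb', le_min_iff]
        constructor <;> linarith
      · rw [abs_of_neg hb, abs_of_pos h2', hb']; linarith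
  · -- a < 0, 0 < b
    rw [abs_of_neg ha] at h2 hc2
    rw [abs_of_pos hb] at h2
    have hab : 0 < a + b := by linarith
    rw [abs_of_pos hab] at hc1
    rcases hcase with ⟨ha', hb'⟩ | ⟨ha', hb'⟩
    · -- a' = -b < 0, b' = a + 2b > 0
      have h1' : a' < 0 := by rw [ha']; linarith
      have h2' : 0 < b' := by rw [hb']; linarith
      refine ⟨mul_neg_of_neg_of_pos h1' h2', ?_, ?_, ?_⟩
      · rw [abs_of_neg h1', abs_of_pos h2', ha', hb']; linarith
      · have : 0 < a' + b' := by rw [ha', hb']; linarith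
        rw [abs_of_pos this, abs_of_neg h1', ha', hb', le_min_iff]
        constructor <;> linarith
      · rw [abs_of_pos hb, abs_of_pos h2', hb']; linarith
    · -- a' = -a > 0, b' = a - b < 0
      have h1' : 0 < a' := by rw [ha']; linarith
      have h2' : b' < 0 := by rw [hb']; linarith
      refine ⟨mul_neg_of_pos_of_neg h1' h2', ?_, ?_, ?_⟩
      · rw [abs_of_pos h1', abs_of_neg h2', ha', hb']; linarith
      · have : a' + b' < 0 := by rw [ha', hb']; linarith
        rw [abs_of_neg this, abs_of_pos h1', ha', hb', le_min_iff]
        constructor <;> linarith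
      · rw [abs_of_pos hb, abs_of_neg h2', hb']; linarith

theorem iterated_transfer_growth (M : ℕ → Matrix (Fin 2) (Fin 2) ℝ)
    (hM : ∀ i, M i = T101 ∨ M i = T01)
    (y : ℕ → Fin 2 → ℝ) (hrec : ∀ i, y (i + 1) = (M i).mulVec (y i))
    (hsign : y 0 0 * y 0 1 < 0) (habs : |y 0 0| < |y 0 1|) :
    (∀ i : ℕ, |y i 1| ≥ |y 0 1| + i * min |y 0 0 + y 0 1| |y 0 0|) ∧
    Filter.Tendsto (fun i => |y i 1|) Filter.atTop Filter.atTop := by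
  set c : ℝ := min |y 0 0 + y 0 1| |y 0 0| with hc
  have hc0 : 0 < c := by
    apply lt_min
    · have h := abs_sub_abs_le_abs_sub (y 0 1) (-(y 0 0))
      rw [abs_neg, sub_neg_eq_add] at h
      have : |y 0 1 + y 0 0| = |y 0 0 + y 0 1| := by rw [add_comm]
      rw [this] at h
      linarith
    · have : y 0 0 ≠ 0 := by
        intro h; rw [h] at hsign; simp at hsign
      exact abs_pos.mpr this
  have key : ∀ i, y i 0 * y i 1 < 0 ∧ |y i 0| < |y i 1| ∧
      c ≤ min |y i 0 + y i 1| |y i 0| ∧ |y 0 1| + i * c ≤ |y i 1| := by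
    intro i
    induction i with
    | zero => exact ⟨hsign, habs, le_refl _, by simp⟩
    | succ n ih =>
      obtain ⟨ih1, ih2, ih3, ih4⟩ := ih
      have hcase : (y (n+1) 0 = -(y n 1) ∧ y (n+1) 1 = y n 0 + 2 * y n 1) ∨
          (y (n+1) 0 = -(y n 0) ∧ y (n+1) 1 = y n 0 - y n 1) := by
        rcases hM n with h | h
        · left; rw [hrec n, h]; exact T101_apply (y n)
        · right; rw [hrec n, h]; exact T01_apply (y n)
      obtain ⟨s1, s2, s3, s4⟩ := step_lemma c (y n 0) (y n 1) (y (n+1) 0) (y (n+1) 1)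
        ih1 ih2 ih3 hcase
      refine ⟨s1, s2, s3, ?_⟩
      push_cast
      have : |y 0 1| + (n + 1) * c = (|y 0 1| + n * c) + c := by ring
      rw [this]
      calc (|y 0 1| + n * c) + c ≤ |y n 1| + c := by linarith
        _ ≤ |y (n+1) 1| := s4
  constructor
  · intro i
    exact (key i).2.2.2
  · apply Filter.tendsto_atTop_mono (fun i => (key i).2.2.2)
    apply Filter.tendsto_atTop_add_const_left
    exact Filter.Tendsto.atTop_mul_const hc0 tendsto_natCast_atTop_atTop
end

section
/- Let b : ℕ → {0,1} be a sequence containing neither 00 nor 111 as a subword, and which is not eventually periodic with period pattern (101)^∞ or (01)^∞ (e.g. b contains infinitely many occurrences of both 01-blocks and 101-blocks in its block decomposition). Then every nonzero solution x : ℕ → ℝ (with the convention x_{−1} = 0) of the recurrence x_{n+1} = −b_n x_n − x_{n−1} is unbounded. -/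
private def XX (x : ℕ → ℝ) : ℕ → ℝ
  | 0 => 0
  | n + 1 => x n

private def zp (b : ℕ → Bool) (n0 : ℕ) : ℕ → ℕ
  | 0 => n0
  | k + 1 => zp b n0 k + (if b (zp b n0 k + 2) then 3 else 2)

private lemma abs_sub_of_mul_nonpos {p q : ℝ} (h : p * q ≤ 0) : |p - q| = |p| + |q| := by
  rcases le_total 0 p with hp | hp <;> rcases le_total 0 q with hq | hq
  · have h0 : p * q = 0 := le_antisymm h (mul_nonneg hp hq)
    rcases mul_eq_zero.mp h0 with h1 | h1 <;> simp [h1]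
  · rw [abs_of_nonneg (by linarith : (0:ℝ) ≤ p - q), abs_of_nonneg hp, abs_of_nonpos hq]; ring
  · rw [abs_of_nonpos (by linarith : p - q ≤ (0:ℝ)), abs_of_nonpos hp, abs_of_nonneg hq]; ring
  · have h0 : p * q = 0 := le_antisymm h (by nlinarith)
    rcases mul_eq_zero.mp h0 with h1 | h1 <;> simp [h1]

private lemma blockstep2 (b : ℕ → Bool) (X : ℕ → ℝ)
    (hXrec : ∀ n, X (n + 2) = -(if b n then (1:ℝ) else 0) * X (n + 1) - X n)
    (hb01 : ∀ n, b n = false → b (n + 1) = true)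
    {n : ℕ} (hn : b n = false) :
    X (n + 2) = -X n ∧ X (n + 3) = X n - X (n + 1) := by
  have h1 := hXrec n
  have h2 := hXrec (n + 1)
  rw [hn] at h1
  rw [hb01 n hn] at h2
  rw [show n + 1 + 2 = n + 3 from rfl, show n + 1 + 1 = n + 2 from rfl] at h2
  simp at h1 h2
  constructor
  · linarith
  · linarith

private lemma blockstep3 (b : ℕ → Bool) (X : ℕ → ℝ)
    (hXrec : ∀ n, X (n + 2) = -(if b n then (1:ℝ) else 0) * X (n + 1) - X n)
    (hb01 : ∀ n, b n = false → b (n + 1) = true)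
    (hb111 : ∀ n, b n = true → b (n + 1) = true → b (n + 2) = false)
    {n : ℕ} (hn : b n = false) (h2 : b (n + 2) = true) :
    X (n + 3) = X n - X (n + 1) ∧ X (n + 4) = X (n + 1) ∧ b (n + 3) = false := by
  obtain ⟨e1, e2⟩ := blockstep2 b X hXrec hb01 hn
  have h3 := hXrec (n + 2)
  rw [h2] at h3
  rw [show n + 2 + 2 = n + 4 from rfl, show n + 2 + 1 = n + 3 from rfl] at h3
  simp at h3
  refine ⟨e2, by rw [h3, e2, e1]; ring, ?_⟩
  have h4 := hb111 (n + 1) (hb01 n hn) (by rw [show n + 1 + 1 = n + 2 from rfl]; exact h2)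
  rwa [show n + 1 + 2 = n + 3 from rfl] at h4

theorem nonzero_solutions_unbounded (b : ℕ → Bool)
    (h00 : ¬ ∃ n : ℕ, b n = false ∧ b (n + 1) = false)
    (h111 : ¬ ∃ n : ℕ, b n = true ∧ b (n + 1) = true ∧ b (n + 2) = true)
    -- `b` does not have the eventually 2-periodic tail `(01)^∞` …
    (hper2 : ¬ ∃ N : ℕ, ∀ n : ℕ, N ≤ n → b (n + 2) = b n)
    -- … nor the eventually 3-periodic tail `(101)^∞`
    (hper3 : ¬ ∃ N : ℕ, ∀ n : ℕ, N ≤ n → b (n + 3) = b n)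
    (x : ℕ → ℝ)
    (hx1 : x 1 = -(if b 0 then (1 : ℝ) else 0) * x 0)
    (hrec : ∀ n : ℕ, x (n + 2) = -(if b (n + 1) then (1 : ℝ) else 0) * x (n + 1) - x n)
    (hx0 : x 0 ≠ 0) :
    ¬ ∃ C : ℝ, ∀ n : ℕ, |x n| ≤ C := by
  rintro ⟨C, hC⟩
  have hb01 : ∀ n, b n = false → b (n + 1) = true := by
    intro n hn
    cases h : b (n + 1)
    · exact absurd ⟨n, hn, h⟩ h00
    · rfl
  have hb111 : ∀ n, b n = true → b (n + 1) = true → b (n + 2) = false := by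
    intro n h1 h2
    cases h : b (n + 2)
    · rfl
    · exact absurd ⟨n, h1, h2, h⟩ h111
  have hXrec : ∀ n, XX x (n + 2) = -(if b n then (1:ℝ) else 0) * XX x (n + 1) - XX x n := by
    intro n
    cases n with
    | zero =>
      show x 1 = -(if b 0 then (1:ℝ) else 0) * x 0 - 0
      rw [hx1]; ring
    | succ m => exact hrec m
  have hXC : ∀ n, |XX x n| ≤ C := by
    intro n
    cases n with
    | zero =>
      show |(0:ℝ)| ≤ C
      rw [abs_zero]
      exact le_trans (abs_nonneg (x 0)) (hC 0)
    | succ m => exact hC m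
  -- initial zero position
  obtain ⟨n0, hn0f, hcone0, hne0⟩ :
      ∃ n0, b n0 = false ∧ XX x n0 * XX x (n0 + 1) ≤ 0 ∧
        (XX x n0 ≠ 0 ∨ XX x (n0 + 1) ≠ 0) := by
    cases hb0 : b 0 with
    | false =>
      refine ⟨0, hb0, ?_, Or.inr ?_⟩
      · show (0:ℝ) * x 0 ≤ 0
        simp
      · exact hx0
    | true =>
      have hx1' : x 1 = -x 0 := by rw [hx1, hb0]; norm_num
      cases hb1 : b 1 with
      | false =>
        refine ⟨1, hb1, ?_, Or.inl hx0⟩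
        show x 0 * x 1 ≤ 0
        rw [hx1']
        nlinarith [sq_nonneg (x 0)]
      | true =>
        have hx2 : x 2 = 0 := by
          have h := hrec 0
          rw [hb1] at h
          simp at h
          rw [h, hx1']; ring
        refine ⟨2, hb111 0 hb0 hb1, ?_, Or.inl ?_⟩
        · show x 1 * x 2 ≤ 0
          rw [hx2]; simp
        · show x 1 ≠ 0
          rw [hx1']
          exact neg_ne_zero.mpr hx0
  -- cone invariant along the zero positions
  have Inv : ∀ k, b (zp b n0 k) = false ∧ XX x (zp b n0 k) * XX x (zp b n0 k + 1) ≤ 0 := by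
    intro k
    induction k with
    | zero => exact ⟨hn0f, hcone0⟩
    | succ k ih =>
      obtain ⟨hbz, hcz⟩ := ih
      cases hb2 : b (zp b n0 k + 2) with
      | false =>
        have hz1 : zp b n0 (k + 1) = zp b n0 k + 2 := by simp [zp, hb2]
        obtain ⟨e1, e2⟩ := blockstep2 b (XX x) hXrec hb01 hbz
        rw [hz1]
        refine ⟨hb2, ?_⟩
        rw [show zp b n0 k + 2 + 1 = zp b n0 k + 3 from rfl, e1, e2]
        nlinarith [sq_nonneg (XX x (zp b n0 k))]
      | true =>
        have hz1 : zp b n0 (k + 1) = zp b n0 k + 3 := by simp [zp, hb2]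
        obtain ⟨e1, e2, e3⟩ := blockstep3 b (XX x) hXrec hb01 hb111 hbz hb2
        rw [hz1]
        refine ⟨e3, ?_⟩
        rw [show zp b n0 k + 3 + 1 = zp b n0 k + 4 from rfl, e1, e2]
        nlinarith [sq_nonneg (XX x (zp b n0 k + 1))]
  -- existence of a 01-block (from non-periodicity 3)
  have Hf0 : ∃ k, b (zp b n0 k + 2) = false := by
    by_contra hcon
    have hall : ∀ k, b (zp b n0 k + 2) = true := by
      intro k
      cases h : b (zp b n0 k + 2)
      · exact absurd ⟨k, h⟩ hcon
      · rfl
    have hz3 : ∀ j, zp b n0 j = n0 + 3 * j := by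
      intro j
      induction j with
      | zero => simp [zp]
      | succ j ih =>
        have h : zp b n0 (j + 1) = zp b n0 j + 3 := by simp [zp, hall j]
        omega
    have hpat : ∀ j, b (n0 + 3 * j) = false ∧ b (n0 + 3 * j + 1) = true ∧
        b (n0 + 3 * j + 2) = true := by
      intro j
      have h0 : b (zp b n0 j) = false := (Inv j).1
      rw [hz3 j] at h0
      have h2 := hall j
      rw [hz3 j] at h2
      exact ⟨h0, hb01 _ h0, h2⟩
    refine hper3 ⟨n0, ?_⟩
    intro n hn
    obtain ⟨d, rfl⟩ := Nat.exists_eq_add_of_le hn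
    obtain ⟨j, r, hr, rfl⟩ : ∃ j r, r < 3 ∧ d = 3 * j + r := ⟨d / 3, d % 3, by omega, by omega⟩
    obtain ⟨p0, p1, p2⟩ := hpat j
    obtain ⟨q0, q1, q2⟩ := hpat (j + 1)
    interval_cases r
    · rw [show n0 + (3 * j + 0) + 3 = n0 + 3 * (j + 1) from by ring,
        show n0 + (3 * j + 0) = n0 + 3 * j from by ring, q0, p0]
    · rw [show n0 + (3 * j + 1) + 3 = n0 + 3 * (j + 1) + 1 from by ring,
        show n0 + (3 * j + 1) = n0 + 3 * j + 1 from by ring, q1, p1]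
    · rw [show n0 + (3 * j + 2) + 3 = n0 + 3 * (j + 1) + 2 from by ring,
        show n0 + (3 * j + 2) = n0 + 3 * j + 2 from by ring, q2, p2]
  -- existence of a 011-block (from non-periodicity 2)
  have Ht0 : ∃ k, b (zp b n0 k + 2) = true := by
    by_contra hcon
    have hall : ∀ k, b (zp b n0 k + 2) = false := by
      intro k
      cases h : b (zp b n0 k + 2)
      · rfl
      · exact absurd ⟨k, h⟩ hcon
    have hz2 : ∀ j, zp b n0 j = n0 + 2 * j := by
      intro j
      induction j with
      | zero => simp [zp]
      | succ j ih =>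
        have h : zp b n0 (j + 1) = zp b n0 j + 2 := by simp [zp, hall j]
        omega
    have hpat : ∀ j, b (n0 + 2 * j) = false ∧ b (n0 + 2 * j + 1) = true := by
      intro j
      have h0 : b (zp b n0 j) = false := (Inv j).1
      rw [hz2 j] at h0
      exact ⟨h0, hb01 _ h0⟩
    refine hper2 ⟨n0, ?_⟩
    intro n hn
    obtain ⟨d, rfl⟩ := Nat.exists_eq_add_of_le hn
    obtain ⟨j, r, hr, rfl⟩ : ∃ j r, r < 2 ∧ d = 2 * j + r := ⟨d / 2, d % 2, by omega, by omega⟩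
    obtain ⟨p0, p1⟩ := hpat j
    obtain ⟨q0, q1⟩ := hpat (j + 1)
    interval_cases r
    · rw [show n0 + (2 * j + 0) + 2 = n0 + 2 * (j + 1) from by ring,
        show n0 + (2 * j + 0) = n0 + 2 * j from by ring, q0, p0]
    · rw [show n0 + (2 * j + 1) + 2 = n0 + 2 * (j + 1) + 1 from by ring,
        show n0 + (2 * j + 1) = n0 + 2 * j + 1 from by ring, q1, p1]
  -- find a zero position with both coordinates nonzero
  have key1 : ∃ k, XX x (zp b n0 k) ≠ 0 ∧ XX x (zp b n0 k + 1) ≠ 0 := by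
    by_cases hq0 : XX x (n0 + 1) = 0
    · have hp0 : XX x n0 ≠ 0 := by
        rcases hne0 with h | h
        · exact h
        · exact absurd hq0 h
      obtain ⟨k0, k0spec, k0min⟩ : ∃ k0, b (zp b n0 k0 + 2) = false ∧
          ∀ j, j < k0 → b (zp b n0 j + 2) = true := by
        refine ⟨Nat.find Hf0, Nat.find_spec Hf0, fun j hj => ?_⟩
        have h := Nat.find_min Hf0 hj
        cases h' : b (zp b n0 j + 2)
        · exact absurd h' h
        · rfl
      have hpre : ∀ j, j ≤ k0 → XX x (zp b n0 j) = XX x n0 ∧ XX x (zp b n0 j + 1) = 0 := by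
        intro j
        induction j with
        | zero => intro _; exact ⟨rfl, hq0⟩
        | succ j ih =>
          intro hj
          obtain ⟨e1, e2⟩ := ih (by omega)
          have hbt : b (zp b n0 j + 2) = true := k0min j (by omega)
          have hz1 : zp b n0 (j + 1) = zp b n0 j + 3 := by simp [zp, hbt]
          obtain ⟨f1, f2, _⟩ := blockstep3 b (XX x) hXrec hb01 hb111 (Inv j).1 hbt
          refine ⟨?_, ?_⟩
          · rw [hz1, f1, e1, e2]; ring
          · rw [hz1, show zp b n0 j + 3 + 1 = zp b n0 j + 4 from rfl, f2, e2]
      obtain ⟨e1, e2⟩ := hpre k0 le_rfl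
      obtain ⟨f1, f2⟩ := blockstep2 b (XX x) hXrec hb01 (Inv k0).1
      have hz1 : zp b n0 (k0 + 1) = zp b n0 k0 + 2 := by simp [zp, k0spec]
      refine ⟨k0 + 1, ?_, ?_⟩
      · rw [hz1, f1, e1]
        exact neg_ne_zero.mpr hp0
      · rw [hz1, show zp b n0 k0 + 2 + 1 = zp b n0 k0 + 3 from rfl, f2, e1, e2]
        simpa using hp0
    · by_cases hp0 : XX x n0 = 0
      · obtain ⟨k0, k0spec, k0min⟩ : ∃ k0, b (zp b n0 k0 + 2) = true ∧
            ∀ j, j < k0 → b (zp b n0 j + 2) = false := by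
          refine ⟨Nat.find Ht0, Nat.find_spec Ht0, fun j hj => ?_⟩
          have h := Nat.find_min Ht0 hj
          cases h' : b (zp b n0 j + 2)
          · rfl
          · exact absurd h' h
        have hpre : ∀ j, j ≤ k0 →
            XX x (zp b n0 j) = 0 ∧ |XX x (zp b n0 j + 1)| = |XX x (n0 + 1)| := by
          intro j
          induction j with
          | zero => intro _; exact ⟨hp0, rfl⟩
          | succ j ih =>
            intro hj
            obtain ⟨e1, e2⟩ := ih (by omega)
            have hbf : b (zp b n0 j + 2) = false := k0min j (by omega)
            have hz1 : zp b n0 (j + 1) = zp b n0 j + 2 := by simp [zp, hbf]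
            obtain ⟨f1, f2⟩ := blockstep2 b (XX x) hXrec hb01 (Inv j).1
            refine ⟨?_, ?_⟩
            · rw [hz1, f1, e1]; ring
            · rw [hz1, show zp b n0 j + 2 + 1 = zp b n0 j + 3 from rfl, f2, e1,
                zero_sub, abs_neg]
              exact e2
        obtain ⟨e1, e2⟩ := hpre k0 le_rfl
        obtain ⟨f1, f2, _⟩ := blockstep3 b (XX x) hXrec hb01 hb111 (Inv k0).1 k0spec
        have hz1 : zp b n0 (k0 + 1) = zp b n0 k0 + 3 := by simp [zp, k0spec]
        have hqa : XX x (zp b n0 k0 + 1) ≠ 0 := by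
          intro h
          rw [h, abs_zero] at e2
          exact hq0 (abs_eq_zero.mp e2.symm)
        refine ⟨k0 + 1, ?_, ?_⟩
        · rw [hz1, f1, e1]
          simpa using hqa
        · rw [hz1, show zp b n0 k0 + 3 + 1 = zp b n0 k0 + 4 from rfl, f2]
          exact hqa
      · exact ⟨0, hp0, hq0⟩
  obtain ⟨k1, hp1, hq1⟩ := key1
  set m := min |XX x (zp b n0 k1)| |XX x (zp b n0 k1 + 1)| with hmdef
  have hmpos : 0 < m := by
    rw [hmdef]
    exact lt_min (abs_pos.mpr hp1) (abs_pos.mpr hq1)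
  have grow : ∀ j : ℕ,
      m ≤ min |XX x (zp b n0 (k1 + j))| |XX x (zp b n0 (k1 + j) + 1)| ∧
      |XX x (zp b n0 k1)| + |XX x (zp b n0 k1 + 1)| + (j : ℝ) * m ≤
        |XX x (zp b n0 (k1 + j))| + |XX x (zp b n0 (k1 + j) + 1)| := by
    intro j
    induction j with
    | zero =>
      constructor
      · rw [hmdef]
        simp
      · simp
    | succ j ih =>
      obtain ⟨ihm, ihs⟩ := ih
      have hcone := (Inv (k1 + j)).2
      have habs : |XX x (zp b n0 (k1 + j)) - XX x (zp b n0 (k1 + j) + 1)| =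
          |XX x (zp b n0 (k1 + j))| + |XX x (zp b n0 (k1 + j) + 1)| :=
        abs_sub_of_mul_nonpos hcone
      have h1 : m ≤ |XX x (zp b n0 (k1 + j))| := le_trans ihm (min_le_left _ _)
      have h2 : m ≤ |XX x (zp b n0 (k1 + j) + 1)| := le_trans ihm (min_le_right _ _)
      cases hb2 : b (zp b n0 (k1 + j) + 2) with
      | false =>
        have hz1 : zp b n0 (k1 + (j + 1)) = zp b n0 (k1 + j) + 2 := by
          rw [show k1 + (j + 1) = (k1 + j) + 1 from rfl]
          simp [zp, hb2]
        obtain ⟨e1, e2⟩ := blockstep2 b (XX x) hXrec hb01 (Inv (k1 + j)).1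
        have hp' : |XX x (zp b n0 (k1 + (j + 1)))| = |XX x (zp b n0 (k1 + j))| := by
          rw [hz1, e1, abs_neg]
        have hq' : |XX x (zp b n0 (k1 + (j + 1)) + 1)| =
            |XX x (zp b n0 (k1 + j))| + |XX x (zp b n0 (k1 + j) + 1)| := by
          rw [hz1, show zp b n0 (k1 + j) + 2 + 1 = zp b n0 (k1 + j) + 3 from rfl, e2, habs]
        constructor
        · rw [hp', hq']
          exact le_min h1 (by linarith)
        · rw [hp', hq']
          push_cast
          linarith
      | true =>
        have hz1 : zp b n0 (k1 + (j + 1)) = zp b n0 (k1 + j) + 3 := by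
          rw [show k1 + (j + 1) = (k1 + j) + 1 from rfl]
          simp [zp, hb2]
        obtain ⟨f1, f2, _⟩ := blockstep3 b (XX x) hXrec hb01 hb111 (Inv (k1 + j)).1 hb2
        have hp' : |XX x (zp b n0 (k1 + (j + 1)))| =
            |XX x (zp b n0 (k1 + j))| + |XX x (zp b n0 (k1 + j) + 1)| := by
          rw [hz1, f1, habs]
        have hq' : |XX x (zp b n0 (k1 + (j + 1)) + 1)| = |XX x (zp b n0 (k1 + j) + 1)| := by
          rw [hz1, show zp b n0 (k1 + j) + 3 + 1 = zp b n0 (k1 + j) + 4 from rfl, f2]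
        constructor
        · rw [hp', hq']
          exact le_min (by linarith) h2
        · rw [hp', hq']
          push_cast
          linarith
  obtain ⟨j, hj⟩ := exists_nat_gt ((2 * C) / m)
  obtain ⟨_, hs⟩ := grow j
  have h1 := hXC (zp b n0 (k1 + j))
  have h2 := hXC (zp b n0 (k1 + j) + 1)
  have hjm : 2 * C < (j : ℝ) * m := (div_lt_iff₀ hmpos).mp hj
  have hs0 : (0:ℝ) ≤ |XX x (zp b n0 k1)| + |XX x (zp b n0 k1 + 1)| := by positivity
  linarith
end

section
/- Let B be the two-sided infinite tridiagonal operator on bounded real sequences x : ℤ → ℝ given by (Bx)_n = x_{n−1} + b_n x_n + x_{n+1}, where b : ℤ → {0,1} contains the central pattern 101 101 01 101 101 around some position and decomposes into blocks {101,01} to the right and {101,10} to the left of the central 01-block, with infinitely many blocks on each side not all eventually equal. If x solves Bx = 0 and x is bounded, then x = 0. (Specialization: this holds when b belongs to the Fibonacci subshift, giving injectivity of every limit operator of the Fibonacci Hamiltonian on ℓ^∞(ℤ).) -/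
section FibAux

variable {b : ℤ → Bool} {x : ℤ → ℝ}

private lemma sol0 (hsol : ∀ n : ℤ, x (n - 1) + (if b n then (1 : ℝ) else 0) * x n + x (n + 1) = 0)
    {n : ℤ} (hn : b n = false) : x (n - 1) + x (n + 1) = 0 := by
  have h := hsol n; rw [hn] at h; simpa using h

private lemma sol1 (hsol : ∀ n : ℤ, x (n - 1) + (if b n then (1 : ℝ) else 0) * x n + x (n + 1) = 0)
    {n : ℤ} (hn : b n = true) : x (n - 1) + x n + x (n + 1) = 0 := by
  have h := hsol n; rw [hn] at h; simpa using h

private lemma fstep (h00 : ¬ ∃ n : ℤ, b n = false ∧ b (n + 1) = false)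
    (h111 : ¬ ∃ n : ℤ, b n = true ∧ b (n + 1) = true ∧ b (n + 2) = true)
    {z : ℤ} (hz : b z = false) :
    (b (z+1) = true ∧ b (z+2) = false) ∨
    (b (z+1) = true ∧ b (z+2) = true ∧ b (z+3) = false) := by
  have h1 : b (z+1) = true := by
    cases h : b (z+1) with
    | false => exact absurd ⟨z, hz, h⟩ h00
    | true => rfl
  rcases Bool.eq_false_or_eq_true (b (z+2)) with h2 | h2
  · rcases Bool.eq_false_or_eq_true (b (z+3)) with h3 | h3
    · exact absurd ⟨z+1, h1, by rwa [show z+1+1 = z+2 by ring],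
        by rwa [show z+1+2 = z+3 by ring]⟩ h111
    · exact Or.inr ⟨h1, h2, h3⟩
  · exact Or.inl ⟨h1, h2⟩

private lemma bstep (h00 : ¬ ∃ n : ℤ, b n = false ∧ b (n + 1) = false)
    (h111 : ¬ ∃ n : ℤ, b n = true ∧ b (n + 1) = true ∧ b (n + 2) = true)
    {z : ℤ} (hz : b z = false) :
    (b (z-1) = true ∧ b (z-2) = false) ∨
    (b (z-1) = true ∧ b (z-2) = true ∧ b (z-3) = false) := by
  have h1 : b (z-1) = true := by
    cases h : b (z-1) with
    | false => exact absurd ⟨z-1, h, by rwa [show z-1+1 = z by ring]⟩ h00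
    | true => rfl
  rcases Bool.eq_false_or_eq_true (b (z-2)) with h2 | h2
  · rcases Bool.eq_false_or_eq_true (b (z-3)) with h3 | h3
    · exact absurd ⟨z-3, h3, by rwa [show z-3+1 = z-2 by ring],
        by rwa [show z-3+2 = z-1 by ring]⟩ h111
    · exact Or.inr ⟨h1, h2, h3⟩
  · exact Or.inl ⟨h1, h2⟩

private lemma fstepPQ (h00 : ¬ ∃ n : ℤ, b n = false ∧ b (n + 1) = false)
    (h111 : ¬ ∃ n : ℤ, b n = true ∧ b (n + 1) = true ∧ b (n + 2) = true)
    (hsol : ∀ n : ℤ, x (n - 1) + (if b n then (1 : ℝ) else 0) * x n + x (n + 1) = 0)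
    {z : ℤ} (hz : b z = false) :
    (b (z+1) = true ∧ b (z+2) = false ∧ x (z+2) = x (z-1) - x z ∧ x (z+1) = -x (z-1)) ∨
    (b (z+1) = true ∧ b (z+2) = true ∧ b (z+3) = false ∧
      x (z+3) = x z ∧ x (z+2) = x (z-1) - x z) := by
  have e0 := sol0 hsol hz
  rcases fstep h00 h111 hz with ⟨h1, h2⟩ | ⟨h1, h2, h3⟩
  · have e1 := sol1 hsol h1
    rw [show z+1-1 = z by ring, show z+1+1 = z+2 by ring] at e1
    exact Or.inl ⟨h1, h2, by linarith, by linarith⟩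
  · have e1 := sol1 hsol h1
    rw [show z+1-1 = z by ring, show z+1+1 = z+2 by ring] at e1
    have e2 := sol1 hsol h2
    rw [show z+2-1 = z+1 by ring, show z+2+1 = z+3 by ring] at e2
    exact Or.inr ⟨h1, h2, h3, by linarith, by linarith⟩

private lemma bstepPQ (h00 : ¬ ∃ n : ℤ, b n = false ∧ b (n + 1) = false)
    (h111 : ¬ ∃ n : ℤ, b n = true ∧ b (n + 1) = true ∧ b (n + 2) = true)
    (hsol : ∀ n : ℤ, x (n - 1) + (if b n then (1 : ℝ) else 0) * x n + x (n + 1) = 0)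
    {z : ℤ} (hz : b z = false) :
    (b (z-1) = true ∧ b (z-2) = false ∧ x (z-2) = -x (z-1) - x z ∧ x (z-3) = -x (z-1)) ∨
    (b (z-1) = true ∧ b (z-2) = true ∧ b (z-3) = false ∧
      x (z-3) = x z ∧ x (z-4) = x (z-1) + x z) := by
  rcases bstep h00 h111 hz with ⟨h1, h2⟩ | ⟨h1, h2, h3⟩
  · have e1 := sol1 hsol h1
    rw [show z-1-1 = z-2 by ring, show z-1+1 = z by ring] at e1
    have e2 := sol0 hsol h2
    rw [show z-2-1 = z-3 by ring, show z-2+1 = z-1 by ring] at e2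
    exact Or.inl ⟨h1, h2, by linarith, by linarith⟩
  · have e1 := sol1 hsol h1
    rw [show z-1-1 = z-2 by ring, show z-1+1 = z by ring] at e1
    have e2 := sol1 hsol h2
    rw [show z-2-1 = z-3 by ring, show z-2+1 = z-1 by ring] at e2
    have e3 := sol0 hsol h3
    rw [show z-3-1 = z-4 by ring, show z-3+1 = z-2 by ring] at e3
    exact Or.inr ⟨h1, h2, h3, by linarith, by linarith⟩

private lemma habsn {p q : ℝ} (h : p * q < 0) : |q - p| = |p| + |q| := by
  rcases mul_neg_iff.mp h with ⟨hp, hq⟩ | ⟨hp, hq⟩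
  · rw [abs_of_pos hp, abs_of_neg hq, abs_of_neg (by linarith : q - p < 0)]; ring
  · rw [abs_of_neg hp, abs_of_pos hq, abs_of_pos (by linarith : 0 < q - p)]; ring

private lemma habsp {p q : ℝ} (h : 0 < p * q) : |q + p| = |p| + |q| := by
  rcases mul_pos_iff.mp h with ⟨hp, hq⟩ | ⟨hp, hq⟩
  · rw [abs_of_pos hp, abs_of_pos hq, abs_of_pos (by linarith : 0 < q + p)]; ring
  · rw [abs_of_neg hp, abs_of_neg hq, abs_of_neg (by linarith : q + p < 0)]; ring

private lemma hprodF2 {p q : ℝ} (h : p * q < 0) : (q - p) * (-q) < 0 := by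
  have hq : q ≠ 0 := by rintro rfl; simp at h
  have : 0 < q * q := mul_self_pos.mpr hq
  nlinarith

private lemma hprodF3 {p q : ℝ} (h : p * q < 0) : p * (q - p) < 0 := by
  have hp : p ≠ 0 := by rintro rfl; simp at h
  have : 0 < p * p := mul_self_pos.mpr hp
  nlinarith

private lemma hprodB2 {p q : ℝ} (h : 0 < p * q) : 0 < (-q - p) * (-q) := by
  have hq : q ≠ 0 := by rintro rfl; simp at h
  have : 0 < q * q := mul_self_pos.mpr hq
  nlinarith

private lemma hprodB3 {p q : ℝ} (h : 0 < p * q) : 0 < p * (q + p) := by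
  have hp : p ≠ 0 := by rintro rfl; simp at h
  have : 0 < p * p := mul_self_pos.mpr hp
  nlinarith

private lemma fwd_unbounded (h00 : ¬ ∃ n : ℤ, b n = false ∧ b (n + 1) = false)
    (h111 : ¬ ∃ n : ℤ, b n = true ∧ b (n + 1) = true ∧ b (n + 2) = true)
    (hsol : ∀ n : ℤ, x (n - 1) + (if b n then (1 : ℝ) else 0) * x n + x (n + 1) = 0)
    {z : ℤ} (hz : b z = false) (hpq : x z * x (z-1) < 0)
    {C : ℝ} (hC : ∀ n, |x n| ≤ C) : False := by
  set m := min |x z| |x (z-1)| with hmdef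
  have main : ∀ k : ℕ, ∃ w, b w = false ∧ x w * x (w-1) < 0 ∧
      m ≤ |x w| ∧ m ≤ |x (w-1)| ∧
      |x z| + |x (z-1)| + k * m ≤ |x w| + |x (w-1)| := by
    intro k; induction k with
    | zero => exact ⟨z, hz, hpq, min_le_left _ _, min_le_right _ _, by simp⟩
    | succ k ih =>
      obtain ⟨w, hw, hprod, hmp, hmq, hsum⟩ := ih
      have habs := habsn hprod
      have haq := abs_nonneg (x (w-1))
      have hap := abs_nonneg (x w)
      rcases fstepPQ h00 h111 hsol hw with ⟨h1, h2, e1, e2⟩ | ⟨h1, h2, h3, e1, e2⟩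
      · refine ⟨w+2, h2, ?_, ?_, ?_, ?_⟩
        · rw [show w+2-1 = w+1 by ring, e1, e2]; exact hprodF2 hprod
        · rw [e1, habs]; linarith
        · rw [show w+2-1 = w+1 by ring, e2, abs_neg]; exact hmq
        · rw [show w+2-1 = w+1 by ring, e1, e2, habs, abs_neg]
          push_cast; linarith
      · refine ⟨w+3, h3, ?_, ?_, ?_, ?_⟩
        · rw [show w+3-1 = w+2 by ring, e1, e2]; exact hprodF3 hprod
        · rw [e1]; exact hmp
        · rw [show w+3-1 = w+2 by ring, e2, habs]; linarith
        · rw [show w+3-1 = w+2 by ring, e1, e2, habs]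
          push_cast; linarith
  have hm0 : 0 < m := by
    rcases mul_neg_iff.mp hpq with ⟨hp, hq⟩ | ⟨hp, hq⟩
    · exact lt_min (abs_pos.mpr (ne_of_gt hp)) (abs_pos.mpr (ne_of_lt hq))
    · exact lt_min (abs_pos.mpr (ne_of_lt hp)) (abs_pos.mpr (ne_of_gt hq))
  obtain ⟨k, hk⟩ := exists_nat_gt ((2*C) / m)
  have hk' : 2*C < k * m := by
    have := (div_lt_iff₀ hm0).mp hk
    linarith
  obtain ⟨w, _, _, _, _, hsum⟩ := main k
  have h1 := hC w
  have h2 := hC (w-1)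
  have hz1 := abs_nonneg (x z)
  have hz2 := abs_nonneg (x (z-1))
  linarith

private lemma bwd_unbounded (h00 : ¬ ∃ n : ℤ, b n = false ∧ b (n + 1) = false)
    (h111 : ¬ ∃ n : ℤ, b n = true ∧ b (n + 1) = true ∧ b (n + 2) = true)
    (hsol : ∀ n : ℤ, x (n - 1) + (if b n then (1 : ℝ) else 0) * x n + x (n + 1) = 0)
    {z : ℤ} (hz : b z = false) (hpq : 0 < x z * x (z-1))
    {C : ℝ} (hC : ∀ n, |x n| ≤ C) : False := by
  set m := min |x z| |x (z-1)| with hmdef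
  have main : ∀ k : ℕ, ∃ w, b w = false ∧ 0 < x w * x (w-1) ∧
      m ≤ |x w| ∧ m ≤ |x (w-1)| ∧
      |x z| + |x (z-1)| + k * m ≤ |x w| + |x (w-1)| := by
    intro k; induction k with
    | zero => exact ⟨z, hz, hpq, min_le_left _ _, min_le_right _ _, by simp⟩
    | succ k ih =>
      obtain ⟨w, hw, hprod, hmp, hmq, hsum⟩ := ih
      have habs := habsp hprod
      have haq := abs_nonneg (x (w-1))
      have hap := abs_nonneg (x w)
      rcases bstepPQ h00 h111 hsol hw with ⟨h1, h2, e1, e2⟩ | ⟨h1, h2, h3, e1, e2⟩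
      · refine ⟨w-2, h2, ?_, ?_, ?_, ?_⟩
        · rw [show w-2-1 = w-3 by ring, e1, e2]; exact hprodB2 hprod
        · rw [e1, show -x (w-1) - x w = -(x (w-1) + x w) by ring, abs_neg, habs]; linarith
        · rw [show w-2-1 = w-3 by ring, e2, abs_neg]; exact hmq
        · rw [show w-2-1 = w-3 by ring, e1, e2,
            show -x (w-1) - x w = -(x (w-1) + x w) by ring, abs_neg, habs, abs_neg]
          push_cast; linarith
      · refine ⟨w-3, h3, ?_, ?_, ?_, ?_⟩
        · rw [show w-3-1 = w-4 by ring, e1, e2]; exact hprodB3 hprod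
        · rw [e1]; exact hmp
        · rw [show w-3-1 = w-4 by ring, e2, habs]; linarith
        · rw [show w-3-1 = w-4 by ring, e1, e2, habs]
          push_cast; linarith
  have hm0 : 0 < m := by
    rcases mul_pos_iff.mp hpq with ⟨hp, hq⟩ | ⟨hp, hq⟩
    · exact lt_min (abs_pos.mpr (ne_of_gt hp)) (abs_pos.mpr (ne_of_gt hq))
    · exact lt_min (abs_pos.mpr (ne_of_lt hp)) (abs_pos.mpr (ne_of_lt hq))
  obtain ⟨k, hk⟩ := exists_nat_gt ((2*C) / m)
  have hk' : 2*C < k * m := by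
    have := (div_lt_iff₀ hm0).mp hk
    linarith
  obtain ⟨w, _, _, _, _, hsum⟩ := main k
  have h1 := hC w
  have h2 := hC (w-1)
  have hz1 := abs_nonneg (x z)
  have hz2 := abs_nonneg (x (z-1))
  linarith

private lemma enterQ0 (h00 : ¬ ∃ n : ℤ, b n = false ∧ b (n + 1) = false)
    (h111 : ¬ ∃ n : ℤ, b n = true ∧ b (n + 1) = true ∧ b (n + 2) = true)
    (hper2R : ¬ ∃ N : ℤ, ∀ n : ℤ, N ≤ n → b (n + 2) = b n)
    (hsol : ∀ n : ℤ, x (n - 1) + (if b n then (1 : ℝ) else 0) * x n + x (n + 1) = 0)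
    {z : ℤ} (hz : b z = false) (hp : x z ≠ 0) (hq : x (z-1) = 0) :
    ∃ w, b w = false ∧ x w * x (w-1) < 0 := by
  by_contra hcon
  push_neg at hcon
  have step : ∀ w, b w = false → x w ≠ 0 → x (w-1) = 0 →
      b (w+1) = true ∧ b (w+2) = false ∧ x (w+2) ≠ 0 ∧ x (w+2-1) = 0 := by
    intro w hw hxw hxw1
    rcases fstepPQ h00 h111 hsol hw with ⟨h1, h2, e1, e2⟩ | ⟨h1, h2, h3, e1, e2⟩
    · refine ⟨h1, h2, ?_, ?_⟩
      · rw [e1, hxw1]; intro h; exact hxw (by linarith)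
      · rw [show w+2-1 = w+1 by ring, e2, hxw1, neg_zero]
    · exfalso
      have hc := hcon (w+3) h3
      rw [show w+3-1 = w+2 by ring, e1, e2, hxw1] at hc
      have : 0 < x w * x w := mul_self_pos.mpr hxw
      nlinarith
  have inv : ∀ k : ℕ, b (z + 2*(k:ℤ)) = false ∧ x (z + 2*(k:ℤ)) ≠ 0 ∧ x (z + 2*(k:ℤ) - 1) = 0 := by
    intro k; induction k with
    | zero => simpa using ⟨hz, hp, hq⟩
    | succ k ih =>
      obtain ⟨hbw, hxw, hxw1⟩ := ih
      have s := step _ hbw hxw hxw1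
      refine ⟨?_, ?_, ?_⟩
      · rw [show z + 2*((k+1:ℕ):ℤ) = z + 2*(k:ℤ) + 2 by push_cast; ring]; exact s.2.1
      · rw [show z + 2*((k+1:ℕ):ℤ) = z + 2*(k:ℤ) + 2 by push_cast; ring]; exact s.2.2.1
      · rw [show z + 2*((k+1:ℕ):ℤ) - 1 = z + 2*(k:ℤ) + 2 - 1 by push_cast; ring]; exact s.2.2.2
  have hOdd : ∀ k : ℕ, b (z + 2*(k:ℤ) + 1) = true := fun k =>
    (step _ (inv k).1 (inv k).2.1 (inv k).2.2).1
  refine hper2R ⟨z, fun n hn => ?_⟩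
  obtain ⟨k, hk⟩ : ∃ k : ℕ, n = z + 2*(k:ℤ) ∨ n = z + 2*(k:ℤ) + 1 :=
    ⟨((n - z)/2).toNat, by omega⟩
  rcases hk with hk | hk
  · rw [hk, show z + 2*(k:ℤ) + 2 = z + 2*((k+1:ℕ):ℤ) by push_cast; ring, (inv (k+1)).1, (inv k).1]
  · rw [hk, show z + 2*(k:ℤ) + 1 + 2 = z + 2*((k+1:ℕ):ℤ) + 1 by push_cast; ring,
      hOdd (k+1), hOdd k]

private lemma enterP0 (h00 : ¬ ∃ n : ℤ, b n = false ∧ b (n + 1) = false)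
    (h111 : ¬ ∃ n : ℤ, b n = true ∧ b (n + 1) = true ∧ b (n + 2) = true)
    (hper3R : ¬ ∃ N : ℤ, ∀ n : ℤ, N ≤ n → b (n + 3) = b n)
    (hsol : ∀ n : ℤ, x (n - 1) + (if b n then (1 : ℝ) else 0) * x n + x (n + 1) = 0)
    {z : ℤ} (hz : b z = false) (hp : x z = 0) (hq : x (z-1) ≠ 0) :
    ∃ w, b w = false ∧ x w * x (w-1) < 0 := by
  by_contra hcon
  push_neg at hcon
  have step : ∀ w, b w = false → x w = 0 → x (w-1) ≠ 0 →
      b (w+1) = true ∧ b (w+2) = true ∧ b (w+3) = false ∧ x (w+3) = 0 ∧ x (w+3-1) ≠ 0 := by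
    intro w hw hxw hxw1
    rcases fstepPQ h00 h111 hsol hw with ⟨h1, h2, e1, e2⟩ | ⟨h1, h2, h3, e1, e2⟩
    · exfalso
      have hc := hcon (w+2) h2
      rw [show w+2-1 = w+1 by ring, e1, e2, hxw] at hc
      have : 0 < x (w-1) * x (w-1) := mul_self_pos.mpr hxw1
      nlinarith
    · refine ⟨h1, h2, h3, by rw [e1, hxw], ?_⟩
      rw [show w+3-1 = w+2 by ring, e2, hxw]
      intro h; exact hxw1 (by linarith)
  have inv : ∀ k : ℕ, b (z + 3*(k:ℤ)) = false ∧ x (z + 3*(k:ℤ)) = 0 ∧ x (z + 3*(k:ℤ) - 1) ≠ 0 := by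
    intro k; induction k with
    | zero => simpa using ⟨hz, hp, hq⟩
    | succ k ih =>
      obtain ⟨hbw, hxw, hxw1⟩ := ih
      have s := step _ hbw hxw hxw1
      refine ⟨?_, ?_, ?_⟩
      · rw [show z + 3*((k+1:ℕ):ℤ) = z + 3*(k:ℤ) + 3 by push_cast; ring]; exact s.2.2.1
      · rw [show z + 3*((k+1:ℕ):ℤ) = z + 3*(k:ℤ) + 3 by push_cast; ring]; exact s.2.2.2.1
      · rw [show z + 3*((k+1:ℕ):ℤ) - 1 = z + 3*(k:ℤ) + 3 - 1 by push_cast; ring]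
        exact s.2.2.2.2
  have hOne : ∀ k : ℕ, b (z + 3*(k:ℤ) + 1) = true := fun k =>
    (step _ (inv k).1 (inv k).2.1 (inv k).2.2).1
  have hTwo : ∀ k : ℕ, b (z + 3*(k:ℤ) + 2) = true := fun k =>
    (step _ (inv k).1 (inv k).2.1 (inv k).2.2).2.1
  refine hper3R ⟨z, fun n hn => ?_⟩
  obtain ⟨k, hk⟩ : ∃ k : ℕ, n = z + 3*(k:ℤ) ∨ n = z + 3*(k:ℤ) + 1 ∨ n = z + 3*(k:ℤ) + 2 :=
    ⟨((n - z)/3).toNat, by omega⟩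
  rcases hk with hk | hk | hk
  · rw [hk, show z + 3*(k:ℤ) + 3 = z + 3*((k+1:ℕ):ℤ) by push_cast; ring, (inv (k+1)).1, (inv k).1]
  · rw [hk, show z + 3*(k:ℤ) + 1 + 3 = z + 3*((k+1:ℕ):ℤ) + 1 by push_cast; ring,
      hOne (k+1), hOne k]
  · rw [hk, show z + 3*(k:ℤ) + 2 + 3 = z + 3*((k+1:ℕ):ℤ) + 2 by push_cast; ring,
      hTwo (k+1), hTwo k]

private lemma allzero
    (hsol : ∀ n : ℤ, x (n - 1) + (if b n then (1 : ℝ) else 0) * x n + x (n + 1) = 0)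
    {k : ℤ} (h0 : x k = 0) (h1 : x (k+1) = 0) : ∀ n, x n = 0 := by
  have fwd : ∀ j : ℕ, x (k + (j:ℤ)) = 0 ∧ x (k + (j:ℤ) + 1) = 0 := by
    intro j; induction j with
    | zero => simpa using ⟨h0, h1⟩
    | succ j ih =>
      have hs := hsol (k + (j:ℤ) + 1)
      rw [show k + (j:ℤ) + 1 - 1 = k + (j:ℤ) by ring, ih.1, ih.2] at hs
      refine ⟨?_, ?_⟩
      · rw [show k + ((j+1:ℕ):ℤ) = k + (j:ℤ) + 1 by push_cast; ring]; exact ih.2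
      · rw [show k + ((j+1:ℕ):ℤ) + 1 = k + (j:ℤ) + 1 + 1 by push_cast; ring]
        have : (if b (k + (j:ℤ) + 1) then (1:ℝ) else 0) * 0 = 0 := mul_zero _
        linarith
  have bwd : ∀ j : ℕ, x (k - (j:ℤ)) = 0 ∧ x (k - (j:ℤ) + 1) = 0 := by
    intro j; induction j with
    | zero => simpa using ⟨h0, h1⟩
    | succ j ih =>
      have hs := hsol (k - (j:ℤ))
      rw [ih.1, ih.2] at hs
      refine ⟨?_, ?_⟩
      · rw [show k - ((j+1:ℕ):ℤ) = k - (j:ℤ) - 1 by push_cast; ring]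
        have : (if b (k - (j:ℤ)) then (1:ℝ) else 0) * 0 = 0 := mul_zero _
        linarith
      · rw [show k - ((j+1:ℕ):ℤ) + 1 = k - (j:ℤ) by push_cast; ring]; exact ih.1
  intro n
  rcases le_total k n with h | h
  · have := (fwd (n - k).toNat).1
    rwa [show k + ((n - k).toNat : ℤ) = n by omega] at this
  · have := (bwd (k - n).toNat).1
    rwa [show k - ((k - n).toNat : ℤ) = n by omega] at this

end FibAux

theorem limit_operator_injective (b : ℤ → Bool)
    (h00 : ¬ ∃ n : ℤ, b n = false ∧ b (n + 1) = false)
    (h111 : ¬ ∃ n : ℤ, b n = true ∧ b (n + 1) = true ∧ b (n + 2) = true)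
    (hocc : ∃ m : ℤ, OccursAt b m
      [true, false, true, true, false, true, false, true, true, false, true, true, false, true])
    -- `b` is not eventually periodic to the right (with pattern `(01)^∞` or `(101)^∞`) …
    (hper2R : ¬ ∃ N : ℤ, ∀ n : ℤ, N ≤ n → b (n + 2) = b n)
    (hper3R : ¬ ∃ N : ℤ, ∀ n : ℤ, N ≤ n → b (n + 3) = b n)
    -- … nor to the left
    (hper2L : ¬ ∃ N : ℤ, ∀ n : ℤ, n ≤ N → b (n + 2) = b n)
    (hper3L : ¬ ∃ N : ℤ, ∀ n : ℤ, n ≤ N → b (n + 3) = b n)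
    (x : ℤ → ℝ)
    (hsol : ∀ n : ℤ, x (n - 1) + (if b n then (1 : ℝ) else 0) * x n + x (n + 1) = 0)
    (hbdd : ∃ C : ℝ, ∀ n : ℤ, |x n| ≤ C) :
    x = 0 := by
  obtain ⟨C, hC⟩ := hbdd
  have hz0 : ∃ z : ℤ, b z = false := by
    by_contra h
    push_neg at h
    exact h111 ⟨0, by simpa using h 0, by simpa using h (0+1), by simpa using h (0+2)⟩
  obtain ⟨z, hz⟩ := hz0
  have hfinal : ∃ k : ℤ, x k = 0 ∧ x (k+1) = 0 := by
    rcases lt_trichotomy (x z * x (z-1)) 0 with h | h | h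
    · exact (fwd_unbounded h00 h111 hsol hz h hC).elim
    · by_cases hp : x z = 0
      · by_cases hq : x (z-1) = 0
        · refine ⟨z-1, hq, ?_⟩
          rw [show z-1+1 = z by ring]; exact hp
        · obtain ⟨w, hw, hwp⟩ := enterP0 h00 h111 hper3R hsol hz hp hq
          exact (fwd_unbounded h00 h111 hsol hw hwp hC).elim
      · have hq : x (z-1) = 0 := by
          rcases mul_eq_zero.mp h with h' | h'
          · exact absurd h' hp
          · exact h'
        obtain ⟨w, hw, hwp⟩ := enterQ0 h00 h111 hper2R hsol hz hp hq
        exact (fwd_unbounded h00 h111 hsol hw hwp hC).elim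
    · exact (bwd_unbounded h00 h111 hsol hz h hC).elim
  obtain ⟨k, hk0, hk1⟩ := hfinal
  funext n
  simpa using allzero hsol hk0 hk1 n
end
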